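/- Let (X, d) be a metric space and let f : X → [−∞,+∞] be (K,N)-convex for some K ∈ ℝ and N < 0. Then for every y ∈ D[f] and every R > 0, with R < π·√(N/K) if K < 0, the descending slope satisfies |D⁻f|(y) = sup over z ∈ B_R(y) \ {y} of max{ −( (N/𝔰_{K,N}(d(z,y)))·(1 − f_N(z)/f_N(y)) − K·𝔰_{K,N}(d(z,y)/2)/𝔠_{K,N}(d(z,y)/2) ), 0 }, where B_R(y) is the open ball of radius R centered at y. -/

import Mathlib

open Filter MeasureTheory Set
open scoped ENNReal Topology

noncomputable section

namespace KNPaper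

variable {X : Type*} [MetricSpace X]

/-- A geodesic parametrized on `[0,1]`: `d(γ s, γ t) = |t - s| * d(γ 0, γ 1)`. -/
def IsGeodesic (γ : ℝ → X) : Prop :=
  ∀ s ∈ Set.Icc (0:ℝ) 1, ∀ t ∈ Set.Icc (0:ℝ) 1,
    dist (γ s) (γ t) = |t - s| * dist (γ 0) (γ 1)

/-- Extended exponential `EReal → ℝ≥0∞`, with `exp ⊥ = 0` and `exp ⊤ = ⊤`. -/
def eexp (x : EReal) : ℝ≥0∞ :=
  if x = ⊤ then ⊤ else if x = ⊥ then 0 else ENNReal.ofReal (Real.exp x.toReal)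

/-- The nonnegative part of an extended real, valued in `ℝ≥0∞`. -/
def epos (x : EReal) : ℝ≥0∞ :=
  if x = ⊤ then ⊤ else ENNReal.ofReal x.toReal

/-- `f_N := exp (-f/N)`, with the conventions `exp(-∞) = 0`, `exp(+∞) = +∞`. -/
def fN (f : X → EReal) (N : ℝ) (x : X) : ℝ≥0∞ :=
  eexp (((-1/N : ℝ) : EReal) * f x)

/-- The finiteness domain `D[f]`. -/
def Dom (f : X → EReal) : Set X := {x | f x ≠ ⊤ ∧ f x ≠ ⊥}

/-- The extended domain `D*[f]`. -/
def DomStar (f : X → EReal) : Set X := {x | f x ≠ ⊤}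

/-- The function `𝔰_{K,N}`. -/
def sKN (K N θ : ℝ) : ℝ :=
  if K < 0 then Real.sin (θ * Real.sqrt (K/N)) / Real.sqrt (K/N)
  else if K = 0 then θ
  else Real.sinh (θ * Real.sqrt (-K/N)) / Real.sqrt (-K/N)

/-- The function `𝔠_{K,N}`. -/
def cKN (K N θ : ℝ) : ℝ :=
  if K < 0 then Real.cos (θ * Real.sqrt (K/N))
  else if K = 0 then 1
  else Real.cosh (θ * Real.sqrt (-K/N))

/-- The distortion coefficient `σ_{K,N}^{(t)}(θ)`, valued in `[0,∞]`. -/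
def sigmaKN (K N t θ : ℝ) : ℝ≥0∞ :=
  if (N * Real.pi ^ 2 < K * θ ^ 2 ∧ K * θ ^ 2 < 0) ∨ 0 < K * θ ^ 2 then
    ENNReal.ofReal (sKN K N (t * θ) / sKN K N θ)
  else if K * θ ^ 2 = 0 then ENNReal.ofReal t
  else ⊤

/-- `(K,N)`-convexity of `f` on a subset `s` (with `N < 0`). -/
def KNConvexOn (f : X → EReal) (K N : ℝ) (s : Set X) : Prop :=
  ∀ x₀ ∈ s, ∀ x₁ ∈ s, f x₀ ≠ ⊤ → f x₁ ≠ ⊤ →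
    (K < 0 → dist x₀ x₁ < Real.pi * Real.sqrt (N / K)) →
    ∃ γ : ℝ → X, IsGeodesic γ ∧ (∀ t ∈ Set.Icc (0:ℝ) 1, γ t ∈ s) ∧ γ 0 = x₀ ∧ γ 1 = x₁ ∧
      ∀ t ∈ Set.Icc (0:ℝ) 1,
        fN f N (γ t) ≤ sigmaKN K N (1 - t) (dist x₀ x₁) * fN f N x₀
          + sigmaKN K N t (dist x₀ x₁) * fN f N x₁

/-- `(K,N)`-convexity of `f` (with `N < 0`). -/
def KNConvex (f : X → EReal) (K N : ℝ) : Prop := KNConvexOn f K N Set.univ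

/-- `λ`-convexity of an extended-real-valued function along geodesics. -/
def LambdaConvex (g : X → EReal) (lam : ℝ) : Prop :=
  ∀ x₀ x₁ : X, x₀ ∈ Dom g → x₁ ∈ Dom g →
    ∃ γ : ℝ → X, IsGeodesic γ ∧ γ 0 = x₀ ∧ γ 1 = x₁ ∧
      ∀ t ∈ Set.Icc (0:ℝ) 1,
        g (γ t) ≤ (((1 - t) * (g x₀).toReal + t * (g x₁).toReal
          - lam / 2 * (t * (1 - t)) * dist x₀ x₁ ^ 2 : ℝ) : EReal)

/-- Upper right Dini derivative of a real function, valued in `EReal`. -/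
def diniUR (g : ℝ → ℝ) (t : ℝ) : EReal :=
  Filter.limsup (fun h : ℝ => (((g (t + h) - g t) / h : ℝ) : EReal)) (𝓝[>] (0:ℝ))

/-- The time interval `(0,T)` for `T ∈ (0,∞]`, as a set of reals. -/
def domT (T : ℝ≥0∞) : Set ℝ := {t : ℝ | 0 < t ∧ ENNReal.ofReal t < T}

/-- `EVI_λ` gradient curve for `g` on `(0,T)`. -/
def IsEVIlam (g : X → EReal) (lam : ℝ) (T : ℝ≥0∞) (z : ℝ → X) : Prop :=
  0 < T ∧ ContinuousOn z (domT T) ∧ (∀ t ∈ domT T, z t ∈ Dom g) ∧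
    ∀ t ∈ domT T, ∀ x ∈ Dom g,
      diniUR (fun s => dist (z s) x ^ 2 / 2) t + ((lam / 2 * dist (z t) x ^ 2 : ℝ) : EReal)
        ≤ (((g x).toReal - (g (z t)).toReal : ℝ) : EReal)

/-- `EVI_{K,N}` gradient curve for `f` on `(0,T)` (with `N < 0`). -/
def IsEVIKN (f : X → EReal) (K N : ℝ) (T : ℝ≥0∞) (y : ℝ → X) : Prop :=
  0 < T ∧ ContinuousOn y (domT T) ∧ (∀ t ∈ domT T, y t ∈ Dom f) ∧
    ∀ t ∈ domT T, ∀ x ∈ closure (Dom f),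
      (K < 0 → dist (y t) x < Real.pi * Real.sqrt (N / K)) →
      diniUR (fun s => sKN K N (dist (y s) x / 2) ^ 2) t
          + ((K * sKN K N (dist (y t) x / 2) ^ 2 : ℝ) : EReal)
        ≤ ((N / 2 : ℝ) : EReal) * (1 - ((fN f N x / fN f N (y t) : ℝ≥0∞) : EReal))

/-- A curve starts at `y₀` if `y_t → y₀` as `t ↓ 0`. -/
def StartsAt (y : ℝ → X) (y₀ : X) : Prop := Filter.Tendsto y (𝓝[>] (0:ℝ)) (𝓝 y₀)

/-- The class `𝒞` of continuous curves on `(0,T)` with values in `D[f]`. -/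
def InC (f : X → EReal) (T : ℝ≥0∞) (y : ℝ → X) : Prop :=
  0 < T ∧ ContinuousOn y (domT T) ∧ ∀ t ∈ domT T, y t ∈ Dom f

/-- The class `𝒞'`: curves in `𝒞` along which `f` is non-increasing. -/
def InC' (f : X → EReal) (T : ℝ≥0∞) (y : ℝ → X) : Prop :=
  InC f T y ∧ ∀ s ∈ domT T, ∀ t ∈ domT T, s ≤ t → f (y t) ≤ f (y s)

/-- The class `𝒞''_N`: curves in `𝒞'` with `∫₀^{min(T,1)} f_N(y_t) dt < ∞`. -/
def InC'' (f : X → EReal) (N : ℝ) (T : ℝ≥0∞) (y : ℝ → X) : Prop :=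
  InC' f T y ∧ ∫⁻ t in Set.Ioo (0:ℝ) ((min T 1).toReal), fN f N (y t) < ⊤

/-- The function `α(t) = -N ∫₀ᵗ f_N(y_r)⁻¹ dr`. -/
def alphaMap (f : X → EReal) (N : ℝ) (y : ℝ → X) (t : ℝ) : ℝ :=
  -N * ∫ r in Set.Ioo (0:ℝ) t, ((fN f N (y r))⁻¹).toReal

/-- The final time `T' = lim_{t→T⁻} α(t)` of the reparametrized curve `ℛ₁(y)`. -/
def R1T (f : X → EReal) (N : ℝ) (T : ℝ≥0∞) (y : ℝ → X) : ℝ≥0∞ :=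
  ⨆ t ∈ domT T, ENNReal.ofReal (alphaMap f N y t)

/-- The reparametrized curve `ℛ₁(y) = y ∘ φ`, `φ = α⁻¹`. -/
def R1fun (f : X → EReal) (N : ℝ) (T : ℝ≥0∞) (y : ℝ → X) : ℝ → X :=
  y ∘ Function.invFunOn (alphaMap f N y) (domT T)

/-- The function `β(s) = -(1/N) ∫₀ˢ f_N(z_r) dr`. -/
def betaMap (f : X → EReal) (N : ℝ) (z : ℝ → X) (s : ℝ) : ℝ :=
  -(1/N) * ∫ r in Set.Ioo (0:ℝ) s, (fN f N (z r)).toReal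

/-- The final time `T = lim_{s→T'⁻} β(s)` of the reparametrized curve `ℛ₂(z)`. -/
def R2T (f : X → EReal) (N : ℝ) (T' : ℝ≥0∞) (z : ℝ → X) : ℝ≥0∞ :=
  ⨆ s ∈ domT T', ENNReal.ofReal (betaMap f N z s)

/-- The reparametrized curve `ℛ₂(z) = z ∘ ψ`, `ψ = β⁻¹`. -/
def R2fun (f : X → EReal) (N : ℝ) (T' : ℝ≥0∞) (z : ℝ → X) : ℝ → X :=
  z ∘ Function.invFunOn (betaMap f N z) (domT T')

/-- The descending slope `|D⁻f|(y) = limsup_{z→y} (f(y)-f(z))⁺ / d(z,y)`, in `[0,∞]`. -/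
def descSlope (f : X → EReal) (y : X) : ℝ≥0∞ :=
  Filter.limsup (fun z : X => epos (f y - f z) / ENNReal.ofReal (dist z y)) (𝓝[≠] y)

/-- Directional derivative `g'(γ 0; ·) = liminf_{t↓0} (g(γ t) - g(γ 0))/t` along a curve. -/
def dirDeriv (g : X → EReal) (γ : ℝ → X) : EReal :=
  Filter.liminf (fun t : ℝ => (g (γ t) - g (γ 0)) * (((1/t : ℝ)) : EReal)) (𝓝[>] (0:ℝ))

/-- The quantity `[ẏ, z]_{t₀} = sup_{0<s≤1} (1/(2s)) (d⁺/dt)|_{t₀} d(y_t, z_s)²`. -/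
def bracket (y z : ℝ → X) (t₀ : ℝ) : EReal :=
  ⨆ s ∈ Set.Ioc (0:ℝ) 1,
    (((1 / (2 * s) : ℝ)) : EReal) * diniUR (fun t => dist (y t) (z s) ^ 2) t₀

/-- Metric speed `|γ̇|(t) = lim_{h→0} d(γ(t+h), γ(t))/|h| = v`. -/
def HasMetricSpeedAt (γ : ℝ → X) (t v : ℝ) : Prop :=
  Filter.Tendsto (fun h : ℝ => dist (γ (t + h)) (γ t) / |h|) (𝓝[≠] (0:ℝ)) (𝓝 v)

open Classical in
/-- The metric speed of a curve at a time (defaulting to `0` when it does not exist). -/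
def metricSpeed (γ : ℝ → X) (t : ℝ) : ℝ :=
  if h : ∃ v, HasMetricSpeedAt γ t v then h.choose else 0

/-- Metric absolute continuity on `[s,t]` with derivative control in `Lᵖ`. -/
def MetricACWith (p : ℝ≥0∞) (γ : ℝ → X) (s t : ℝ) : Prop :=
  ∃ g : ℝ → ℝ, MeasureTheory.MemLp g p (MeasureTheory.volume.restrict (Set.Icc s t)) ∧
    ∀ u ∈ Set.Icc s t, ∀ v ∈ Set.Icc s t, u ≤ v → dist (γ u) (γ v) ≤ ∫ r in u..v, g r

/-- `ACᵖ_loc` on a set: metric absolute continuity on every compact subinterval. -/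
def LocACOn (p : ℝ≥0∞) (γ : ℝ → X) (I : Set ℝ) : Prop :=
  ∀ s t : ℝ, s ≤ t → Set.Icc s t ⊆ I → MetricACWith p γ s t

/-- Curve of maximal slope for `f` on `(0,T)`. -/
def IsMaxSlopeCurve (f : X → EReal) (T : ℝ≥0∞) (y : ℝ → X) : Prop :=
  0 < T ∧ (∀ t ∈ domT T, y t ∈ Dom f) ∧
  LocACOn 1 y (domT T) ∧
  LocACOn 1 (fun t => (f (y t)).toReal) (domT T) ∧
  (∀ᵐ t ∂(MeasureTheory.volume.restrict (domT T)), ∃ v : ℝ, HasMetricSpeedAt y t v) ∧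
  ∀ᵐ t ∂(MeasureTheory.volume.restrict (domT T)),
    ∃ d : ℝ, HasDerivAt (fun s => (f (y s)).toReal) d t ∧
      ENNReal.ofReal (2⁻¹ * metricSpeed y t ^ 2) + 2⁻¹ * descSlope f (y t) ^ 2
        ≤ ENNReal.ofReal (-d)

end KNPaper

/-! Write `d = d(z, y)` and `r = f_N(z) / f_N(y)`, so that `f(y) - f(z) = N log r`; by the
half-angle identity the summand is `((-N)(𝔠(d) - r) / 𝔰(d))⁺`.

Along a geodesic `γ` from `y` to `z`, `(K,N)`-convexity bounds `f_N(γ_t) / f_N(y)` by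
`g(t) = (𝔰((1-t)d) + 𝔰(td) r) / 𝔰(d)`, so `(f(y) - f(γ_t)) / (td) ≥ N log g(t) / (td)`, which tends
to `N g'(0) / d = (-N)(𝔠(d) - r) / 𝔰(d)`: the slope dominates every summand.

Conversely, if every summand is at most `c`, then `r ≥ 𝔠(d) + (c/N) 𝔰(d)` for `z` near `y`, hence
`(f(y) - f(z)) / d ≤ N log(𝔠(d) + (c/N) 𝔰(d)) / d`, and the right side tends to `c` as `d → 0`. -/

lemma ENNReal.div_le_ofReal_add_mul {x a b : ℝ≥0∞} {α β : ℝ} (ha₀ : a ≠ 0)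
    (ha : a ≠ ⊤) (hb : b ≠ ⊤) (hα : 0 ≤ α) (hβ : 0 ≤ β)
    (h : x ≤ ENNReal.ofReal α * a + ENNReal.ofReal β * b) :
    x / a ≤ ENNReal.ofReal (α + β * (b / a).toReal) := by
  rw [ENNReal.ofReal_add hα (by positivity), ENNReal.ofReal_mul hβ,
    ENNReal.ofReal_toReal (ENNReal.div_ne_top hb ha₀)]
  calc x / a ≤ (ENNReal.ofReal α * a + ENNReal.ofReal β * b) / a := ENNReal.div_le_div_right h a
    _ = _ := by rw [ENNReal.add_div, ENNReal.mul_div_cancel_right ha₀ ha, mul_div_assoc]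

lemma tendsto_log_div_of_hasDerivAt {P : ℝ → ℝ} {p : ℝ} (hP : HasDerivAt P p 0)
    (h0 : P 0 = 1) :
    Tendsto (fun t => Real.log (P t) / t) (𝓝[≠] 0) (𝓝 p) := by
  have hlog : HasDerivAt (fun t => Real.log (P t)) p 0 := by
    simpa [h0] using hP.log (by simp [h0])
  refine (hasDerivAt_iff_tendsto_slope.1 hlog).congr fun t => ?_
  simp [slope_def_field, h0]

lemma tendsto_dist_nhdsNE {X : Type*} [MetricSpace X] (y : X) :
    Tendsto (fun z => dist z y) (𝓝[≠] y) (𝓝[>] 0) := by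
  refine tendsto_nhdsWithin_iff.2 ⟨?_, ?_⟩
  · exact ((continuous_id.dist continuous_const).tendsto' y 0 (dist_self y)).mono_left
      nhdsWithin_le_nhds
  · filter_upwards [self_mem_nhdsWithin] with z hz using dist_pos.2 hz

namespace KNPaper

section Distortion

variable {K N : ℝ}

lemma sKN_of_neg (hK : K < 0) (θ : ℝ) :
    sKN K N θ = Real.sin (θ * Real.sqrt (K / N)) / Real.sqrt (K / N) :=
  if_pos hK

lemma sKN_of_pos (hK : 0 < K) (θ : ℝ) :
    sKN K N θ = Real.sinh (θ * Real.sqrt (-K / N)) / Real.sqrt (-K / N) := by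
  rw [sKN, if_neg hK.not_gt, if_neg hK.ne']

lemma cKN_of_neg (hK : K < 0) (θ : ℝ) : cKN K N θ = Real.cos (θ * Real.sqrt (K / N)) :=
  if_pos hK

lemma cKN_of_pos (hK : 0 < K) (θ : ℝ) : cKN K N θ = Real.cosh (θ * Real.sqrt (-K / N)) := by
  rw [cKN, if_neg hK.not_gt, if_neg hK.ne']

@[simp]
lemma sKN_zero_left (θ : ℝ) : sKN 0 N θ = θ := by simp [sKN]

@[simp]
lemma cKN_zero_left (θ : ℝ) : cKN 0 N θ = 1 := by simp [cKN]

@[simp]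
lemma sKN_zero : sKN K N 0 = 0 := by
  unfold sKN; split_ifs <;> simp

@[simp]
lemma cKN_zero : cKN K N 0 = 1 := by
  unfold cKN; split_ifs <;> simp

lemma sqrt_div_pos_of_neg (hN : N < 0) (hK : K < 0) : 0 < Real.sqrt (K / N) :=
  Real.sqrt_pos.2 (div_pos_of_neg_of_neg hK hN)

lemma sqrt_neg_div_pos_of_pos (hN : N < 0) (hK : 0 < K) : 0 < Real.sqrt (-K / N) :=
  Real.sqrt_pos.2 (div_pos_of_neg_of_neg (neg_neg_of_pos hK) hN)

lemma sq_sqrt_div_of_neg (hN : N < 0) (hK : K < 0) : Real.sqrt (K / N) ^ 2 = K / N :=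
  Real.sq_sqrt (div_pos_of_neg_of_neg hK hN).le

lemma sq_sqrt_neg_div_of_pos (hN : N < 0) (hK : 0 < K) : Real.sqrt (-K / N) ^ 2 = -K / N :=
  Real.sq_sqrt (div_pos_of_neg_of_neg (neg_neg_of_pos hK) hN).le

lemma lt_pi_mul_sqrt_iff (hN : N < 0) (hK : K < 0) {θ : ℝ} :
    θ < Real.pi * Real.sqrt (N / K) ↔ θ * Real.sqrt (K / N) < Real.pi := by
  rw [← inv_div K N, Real.sqrt_inv, ← div_eq_mul_inv, lt_div_iff₀ (sqrt_div_pos_of_neg hN hK)]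

lemma hasDerivAt_sKN (hN : N < 0) (θ : ℝ) : HasDerivAt (sKN K N) (cKN K N θ) θ := by
  rcases lt_trichotomy K 0 with hK | rfl | hK
  · have ha := (sqrt_div_pos_of_neg hN hK).ne'
    rw [funext (sKN_of_neg hK), cKN_of_neg hK]
    set a := Real.sqrt (K / N)
    exact (((hasDerivAt_mul_const _).sin).div_const _).congr_deriv (by field_simp)
  · rw [show sKN 0 N = id from funext sKN_zero_left, cKN_zero_left]
    exact hasDerivAt_id θ
  · have ha := (sqrt_neg_div_pos_of_pos hN hK).ne'
    rw [funext (sKN_of_pos hK), cKN_of_pos hK]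
    set a := Real.sqrt (-K / N)
    exact (((hasDerivAt_mul_const _).sinh).div_const _).congr_deriv (by field_simp)

lemma hasDerivAt_cKN (hN : N < 0) (θ : ℝ) :
    HasDerivAt (cKN K N) (-(K / N) * sKN K N θ) θ := by
  rcases lt_trichotomy K 0 with hK | rfl | hK
  · have ha2 := sq_sqrt_div_of_neg hN hK
    have ha := sqrt_div_pos_of_neg hN hK
    rw [funext (cKN_of_neg hK), sKN_of_neg hK]
    set a := Real.sqrt (K / N)
    rw [← ha2]
    exact ((hasDerivAt_mul_const _).cos).congr_deriv (by field_simp)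
  · rw [show cKN 0 N = fun _ => 1 from funext cKN_zero_left, zero_div, neg_zero, zero_mul]
    exact hasDerivAt_const θ 1
  · have ha2 := sq_sqrt_neg_div_of_pos hN hK
    have ha := sqrt_neg_div_pos_of_pos hN hK
    rw [funext (cKN_of_pos hK), sKN_of_pos hK]
    set a := Real.sqrt (-K / N)
    rw [show -(K / N) = -K / N by ring, ← ha2]
    exact ((hasDerivAt_mul_const _).cosh).congr_deriv (by field_simp)

lemma sKN_two_mul (θ : ℝ) : sKN K N (2 * θ) = 2 * sKN K N θ * cKN K N θ := by
  rcases lt_trichotomy K 0 with hK | rfl | hK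
  · simp only [sKN_of_neg hK, cKN_of_neg hK, mul_assoc, Real.sin_two_mul]; ring
  · simp
  · simp only [sKN_of_pos hK, cKN_of_pos hK, mul_assoc, Real.sinh_two_mul]; ring

lemma one_sub_cKN_two_mul (hN : N < 0) (θ : ℝ) :
    1 - cKN K N (2 * θ) = 2 * (K / N) * sKN K N θ ^ 2 := by
  rcases lt_trichotomy K 0 with hK | rfl | hK
  · have ha2 := sq_sqrt_div_of_neg hN hK
    have ha := sqrt_div_pos_of_neg hN hK
    rw [sKN_of_neg hK, cKN_of_neg hK, mul_assoc, Real.cos_two_mul, Real.cos_sq']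
    set a := Real.sqrt (K / N)
    rw [← ha2]
    field_simp; ring
  · simp
  · have ha2 := sq_sqrt_neg_div_of_pos hN hK
    have ha := sqrt_neg_div_pos_of_pos hN hK
    rw [sKN_of_pos hK, cKN_of_pos hK, mul_assoc, Real.cosh_two_mul, Real.cosh_sq]
    set a := Real.sqrt (-K / N)
    rw [show K / N = -(-K / N) by ring, ← ha2]
    field_simp; ring

lemma sKN_pos (hN : N < 0) {θ : ℝ} (hθ : 0 < θ)
    (hθK : K < 0 → θ < Real.pi * Real.sqrt (N / K)) : 0 < sKN K N θ := by
  rcases lt_trichotomy K 0 with hK | rfl | hK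
  · have ha := sqrt_div_pos_of_neg hN hK
    rw [sKN_of_neg hK]
    exact div_pos (Real.sin_pos_of_pos_of_lt_pi (by positivity)
      ((lt_pi_mul_sqrt_iff hN hK).1 (hθK hK))) ha
  · simpa using hθ
  · have ha := sqrt_neg_div_pos_of_pos hN hK
    rw [sKN_of_pos hK]
    exact div_pos (Real.sinh_pos_iff.2 (by positivity)) ha

lemma cKN_pos (hN : N < 0) {θ : ℝ} (hθ : 0 ≤ θ)
    (hθK : K < 0 → 2 * θ < Real.pi * Real.sqrt (N / K)) : 0 < cKN K N θ := by
  rcases lt_trichotomy K 0 with hK | rfl | hK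
  · have ha := sqrt_div_pos_of_neg hN hK
    have h := (lt_pi_mul_sqrt_iff hN hK).1 (hθK hK)
    rw [cKN_of_neg hK]
    refine Real.cos_pos_of_mem_Ioo ⟨?_, by linarith⟩
    nlinarith [Real.pi_pos, mul_nonneg hθ ha.le]
  · simp
  · rw [cKN_of_pos hK]
    exact Real.cosh_pos _

lemma mul_sKN_half_div_cKN_half (hN : N < 0) {θ : ℝ} (hθ : 0 < θ)
    (hθK : K < 0 → θ < Real.pi * Real.sqrt (N / K)) :
    K * sKN K N (θ / 2) / cKN K N (θ / 2) = N * (1 - cKN K N θ) / sKN K N θ := by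
  have hs := sKN_pos hN (half_pos hθ) fun hK => by linarith [hθK hK]
  have hc := cKN_pos hN (half_pos hθ).le fun hK => by linarith [hθK hK]
  have hθ2 : θ = 2 * (θ / 2) := by ring
  rw [hθ2, sKN_two_mul, one_sub_cKN_two_mul hN, ← hθ2]
  field_simp [hN.ne]

lemma sigmaKN_eq_ofReal_div (hN : N < 0) {θ : ℝ} (hθ : 0 < θ)
    (hθK : K < 0 → θ < Real.pi * Real.sqrt (N / K)) (t : ℝ) :
    sigmaKN K N t θ = ENNReal.ofReal (sKN K N (t * θ) / sKN K N θ) := by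
  rcases lt_trichotomy K 0 with hK | rfl | hK
  · have ha2 := sq_sqrt_div_of_neg hN hK
    have ha := sqrt_div_pos_of_neg hN hK
    have h := (lt_pi_mul_sqrt_iff hN hK).1 (hθK hK)
    have hKθ : N * Real.pi ^ 2 < K * θ ^ 2 := by
      set a := Real.sqrt (K / N)
      have hKa : K = N * a ^ 2 := by rw [ha2]; field_simp [hN.ne]
      have hθa : (θ * a) ^ 2 < Real.pi ^ 2 := by nlinarith [mul_pos hθ ha]
      rw [hKa]
      nlinarith
    rw [sigmaKN, if_pos (Or.inl ⟨hKθ, mul_neg_of_neg_of_pos hK (by positivity)⟩)]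
  · simp [sigmaKN, hθ.ne']
  · rw [sigmaKN, if_pos (Or.inr (by positivity))]

lemma tendsto_mul_log_distortion_div (hN : N < 0) {d : ℝ} (hd : 0 < d)
    (hdK : K < 0 → d < Real.pi * Real.sqrt (N / K)) (r : ℝ) :
    Tendsto (fun t => N * Real.log (sKN K N ((1 - t) * d) / sKN K N d
        + sKN K N (t * d) / sKN K N d * r) / (t * d))
      (𝓝[>] 0) (𝓝 ((-N) * (cKN K N d - r) / sKN K N d)) := by
  set g : ℝ → ℝ := fun t =>
    sKN K N ((1 - t) * d) / sKN K N d + sKN K N (t * d) / sKN K N d * r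
  have hs := sKN_pos hN hd hdK
  have hg0 : g 0 = 1 := by simp [g, hs.ne']
  have hg : HasDerivAt g (d * (r - cKN K N d) / sKN K N d) 0 := by
    have h₁ := (hasDerivAt_sKN (K := K) hN ((1 - 0) * d)).comp (0 : ℝ)
      (((hasDerivAt_id (0 : ℝ)).const_sub 1).mul_const d)
    have h₂ := (hasDerivAt_sKN (K := K) hN (0 * d)).comp (0 : ℝ)
      ((hasDerivAt_id (0 : ℝ)).mul_const d)
    refine ((h₁.div_const _).add ((h₂.div_const _).mul_const r)).congr_deriv ?_
    simp only [sub_zero, one_mul, zero_mul, cKN_zero]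
    ring
  have hlim := ((tendsto_log_div_of_hasDerivAt hg hg0).mono_left (nhdsGT_le_nhdsNE 0)).const_mul
    (N / d)
  convert hlim using 2 with t
  · rw [div_mul_div_comm, mul_comm d t]
  · field_simp
    ring

lemma tendsto_mul_log_cKN_add_div (hN : N < 0) (c : ℝ) :
    Tendsto (fun θ => N * Real.log (cKN K N θ + c / N * sKN K N θ) / θ) (𝓝[>] 0)
      (𝓝 c) := by
  have hP : HasDerivAt (fun θ => cKN K N θ + c / N * sKN K N θ) (c / N) 0 := by
    refine ((hasDerivAt_cKN hN 0).add ((hasDerivAt_sKN hN 0).const_mul (c / N))).congr_deriv ?_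
    simp
  have hlim := ((tendsto_log_div_of_hasDerivAt hP (by simp)).mono_left
    (nhdsGT_le_nhdsNE 0)).const_mul N
  convert hlim using 2 with θ
  · ring
  · field_simp [hN.ne]

lemma eventually_cKN_add_mul_sKN_pos (hN : N < 0) (a : ℝ) :
    ∀ᶠ θ in 𝓝[>] 0, 0 < cKN K N θ + a * sKN K N θ := by
  have hcont : ContinuousAt (fun θ => cKN K N θ + a * sKN K N θ) 0 :=
    (hasDerivAt_cKN hN 0).continuousAt.add ((hasDerivAt_sKN hN 0).continuousAt.const_mul a)
  refine (hcont.tendsto.mono_left nhdsWithin_le_nhds).eventually (eventually_gt_nhds ?_)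
  simp

end Distortion

section Extended

variable {X : Type*} {f : X → EReal} {N : ℝ} {x y w : X}

lemma fN_of_mem_Dom (hx : x ∈ Dom f) :
    fN f N x = ENNReal.ofReal (Real.exp ((-1 / N) * (f x).toReal)) := by
  rw [fN, ← EReal.coe_toReal hx.1 hx.2, ← EReal.coe_mul, eexp, if_neg (EReal.coe_ne_top _),
    if_neg (EReal.coe_ne_bot _), EReal.toReal_coe, EReal.toReal_coe]

lemma fN_of_top (hN : N < 0) (hx : f x = ⊤) : fN f N x = ⊤ := by
  rw [fN, hx, EReal.coe_mul_top_of_pos (by exact_mod_cast div_pos_of_neg_of_neg (by norm_num) hN),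
    eexp, if_pos rfl]

lemma fN_of_bot (hN : N < 0) (hx : f x = ⊥) : fN f N x = 0 := by
  rw [fN, hx, EReal.coe_mul_bot_of_pos (by exact_mod_cast div_pos_of_neg_of_neg (by norm_num) hN),
    eexp, if_neg bot_ne_top, if_pos rfl]

lemma fN_ne_top (hN : N < 0) (hx : f x ≠ ⊤) : fN f N x ≠ ⊤ := by
  by_cases hb : f x = ⊥
  · simp [fN_of_bot hN hb]
  · simp [fN_of_mem_Dom ⟨hx, hb⟩]

lemma fN_ne_zero (hx : x ∈ Dom f) : fN f N x ≠ 0 := by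
  simp [fN_of_mem_Dom hx, Real.exp_pos]

lemma epos_sub_of_mem_Dom (hy : y ∈ Dom f) (hw : w ∈ Dom f) :
    epos (f y - f w) = ENNReal.ofReal ((f y).toReal - (f w).toReal) := by
  rw [← EReal.coe_toReal hy.1 hy.2, ← EReal.coe_toReal hw.1 hw.2, ← EReal.coe_sub, epos,
    if_neg (EReal.coe_ne_top _), EReal.toReal_coe, EReal.toReal_coe, EReal.toReal_coe]

lemma mul_log_toReal_fN_div (hN : N < 0) (hy : y ∈ Dom f) (hw : w ∈ Dom f) :
    N * Real.log (fN f N w / fN f N y).toReal = (f y).toReal - (f w).toReal := by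
  rw [ENNReal.toReal_div, fN_of_mem_Dom hy, fN_of_mem_Dom hw, ENNReal.toReal_ofReal (by positivity),
    ENNReal.toReal_ofReal (by positivity), ← Real.exp_sub, Real.log_exp]
  field_simp [hN.ne]
  ring

lemma ofReal_mul_log_div_le (hN : N < 0) (hy : y ∈ Dom f) {ρ δ : ℝ} (hρ : 0 < ρ)
    (hδ : 0 < δ) (hle : fN f N w / fN f N y ≤ ENNReal.ofReal ρ) :
    ENNReal.ofReal (N * Real.log ρ / δ) ≤ epos (f y - f w) / ENNReal.ofReal δ := by
  by_cases hwb : f w = ⊥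
  · simp [hwb, EReal.sub_bot hy.2, epos, ENNReal.top_div_of_ne_top]
  have hwt : f w ≠ ⊤ := by
    rintro hwt
    rw [fN_of_top hN hwt, ENNReal.top_div_of_ne_top (fN_ne_top hN hy.1)] at hle
    exact ENNReal.ofReal_ne_top (top_le_iff.1 hle)
  have hw : w ∈ Dom f := ⟨hwt, hwb⟩
  have hratio : 0 < (fN f N w / fN f N y).toReal :=
    ENNReal.toReal_pos (ENNReal.div_ne_zero.2 ⟨fN_ne_zero hw, fN_ne_top hN hy.1⟩)
      (ENNReal.div_ne_top (fN_ne_top hN hwt) (fN_ne_zero hy))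
  rw [epos_sub_of_mem_Dom hy hw, ← mul_log_toReal_fN_div hN hy hw,
    ← ENNReal.ofReal_div_of_pos hδ]
  refine ENNReal.ofReal_le_ofReal (div_le_div_of_nonneg_right ?_ hδ.le)
  exact mul_le_mul_of_nonpos_left
    (Real.log_le_log hratio (ENNReal.toReal_le_of_le_ofReal hρ.le hle)) hN.le

lemma epos_sub_div_le_ofReal_mul_log (hN : N < 0) (hy : y ∈ Dom f) {ρ δ : ℝ} (hρ : 0 < ρ)
    (hδ : 0 < δ) (hle : ρ ≤ (fN f N w / fN f N y).toReal) :
    epos (f y - f w) / ENNReal.ofReal δ ≤ ENNReal.ofReal (N * Real.log ρ / δ) := by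
  have hw : w ∈ Dom f := by
    refine ⟨fun hwt => ?_, fun hwb => ?_⟩
    · rw [fN_of_top hN hwt, ENNReal.top_div_of_ne_top (fN_ne_top hN hy.1)] at hle
      simp at hle; linarith
    · rw [fN_of_bot hN hwb] at hle
      simp at hle; linarith
  rw [epos_sub_of_mem_Dom hy hw, ← mul_log_toReal_fN_div hN hy hw,
    ← ENNReal.ofReal_div_of_pos hδ]
  refine ENNReal.ofReal_le_ofReal (div_le_div_of_nonneg_right ?_ hδ.le)
  exact mul_le_mul_of_nonpos_left (Real.log_le_log hρ hle) hN.le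

end Extended

section Metric

variable {X : Type*} [MetricSpace X] {f : X → EReal} {K N : ℝ} {y z : X}

lemma IsGeodesic.dist_apply_zero {γ : ℝ → X} (hγ : IsGeodesic γ) {t : ℝ}
    (ht : t ∈ Icc (0 : ℝ) 1) :
    dist (γ t) (γ 0) = t * dist (γ 0) (γ 1) := by
  simpa [abs_of_nonneg ht.1] using hγ t ht 0 ⟨le_rfl, zero_le_one⟩

lemma IsGeodesic.tendsto_nhdsNE {γ : ℝ → X} (hγ : IsGeodesic γ) (hne : γ 0 ≠ γ 1) :
    Tendsto γ (𝓝[>] 0) (𝓝[≠] γ 0) := by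
  have hdist : ∀ᶠ t in 𝓝[>] (0 : ℝ), dist (γ t) (γ 0) = t * dist (γ 0) (γ 1) := by
    filter_upwards [Ioo_mem_nhdsGT one_pos] with t ht using
      hγ.dist_apply_zero (Ioo_subset_Icc_self ht)
  refine tendsto_nhdsWithin_iff.2 ⟨tendsto_iff_dist_tendsto_zero.2 ?_, ?_⟩
  · refine Tendsto.congr' (EventuallyEq.symm hdist) ?_
    simpa using ((continuous_mul_const (dist (γ 0) (γ 1))).tendsto 0).mono_left nhdsWithin_le_nhds
  · filter_upwards [hdist, self_mem_nhdsWithin] with t ht ht0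
    exact dist_pos.1 (ht ▸ mul_pos ht0 (dist_pos.2 hne))

lemma descSlope_le_of_tendsto {h : ℝ → ℝ} {c : ℝ} (hh : Tendsto h (𝓝[>] 0) (𝓝 c))
    (hle : ∀ᶠ z in 𝓝[≠] y,
      epos (f y - f z) / ENNReal.ofReal (dist z y) ≤ ENNReal.ofReal (h (dist z y))) :
    descSlope f y ≤ ENNReal.ofReal c := by
  rcases (𝓝[≠] y).eq_or_neBot with hbot | _
  · simp [descSlope, hbot]
  calc descSlope f y ≤ limsup (fun z => ENNReal.ofReal (h (dist z y))) (𝓝[≠] y) :=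
        limsup_le_limsup hle
    _ = ENNReal.ofReal c := ((ENNReal.tendsto_ofReal hh).comp (tendsto_dist_nhdsNE y)).limsup_eq

lemma ofReal_le_descSlope_of_tendsto {γ : ℝ → X} {h : ℝ → ℝ} {L : ℝ}
    (hγ : Tendsto γ (𝓝[>] 0) (𝓝[≠] y)) (hh : Tendsto h (𝓝[>] 0) (𝓝 L))
    (hle : ∀ᶠ t in 𝓝[>] 0,
      ENNReal.ofReal (h t) ≤ epos (f y - f (γ t)) / ENNReal.ofReal (dist (γ t) y)) :
    ENNReal.ofReal L ≤ descSlope f y := by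
  set F := fun z => epos (f y - f z) / ENNReal.ofReal (dist z y)
  calc ENNReal.ofReal L = liminf (fun t => ENNReal.ofReal (h t)) (𝓝[>] 0) :=
        (ENNReal.tendsto_ofReal hh).liminf_eq.symm
    _ ≤ liminf (F ∘ γ) (𝓝[>] 0) := liminf_le_liminf hle
    _ ≤ limsup (F ∘ γ) (𝓝[>] 0) := liminf_le_limsup
    _ ≤ limsup F (𝓝[≠] y) := (limsup_comp F γ _).trans_le (limsup_le_limsup_of_le hγ)

variable (f K N) in
def slopeBound (y z : X) : ℝ≥0∞ :=
  epos (-(((N / sKN K N (dist z y) : ℝ) : EReal)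
      * (1 - ((fN f N z / fN f N y : ℝ≥0∞) : EReal))
    - ((K * sKN K N (dist z y / 2) / cKN K N (dist z y / 2) : ℝ) : EReal)))

lemma slopeBound_of_top (hN : N < 0) (hy : y ∈ Dom f) (hzy : z ≠ y)
    (hzK : K < 0 → dist z y < Real.pi * Real.sqrt (N / K)) (hz : f z = ⊤) :
    slopeBound f K N y z = 0 := by
  have hs := sKN_pos hN (dist_pos.2 hzy) hzK
  rw [slopeBound, fN_of_top hN hz, ENNReal.top_div_of_ne_top (fN_ne_top hN hy.1),
    EReal.coe_ennreal_top, EReal.sub_top,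
    EReal.coe_mul_bot_of_neg (by exact_mod_cast div_neg_of_neg_of_pos hN hs), EReal.top_sub_coe,
    EReal.neg_top]
  simp [epos]

lemma slopeBound_eq_ofReal (hN : N < 0) (hy : y ∈ Dom f) (hzy : z ≠ y)
    (hzK : K < 0 → dist z y < Real.pi * Real.sqrt (N / K)) (hz : f z ≠ ⊤) :
    slopeBound f K N y z = ENNReal.ofReal
      ((-N) * (cKN K N (dist z y) - (fN f N z / fN f N y).toReal) / sKN K N (dist z y)) := by
  have hd := dist_pos.2 hzy
  have hs := sKN_pos hN hd hzK
  have hr : ((fN f N z / fN f N y : ℝ≥0∞) : EReal)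
      = ((fN f N z / fN f N y).toReal : EReal) := by
    rw [← EReal.coe_ennreal_toReal (ENNReal.div_ne_top (fN_ne_top hN hz) (fN_ne_zero hy))]
  rw [slopeBound, hr, ← EReal.coe_one, ← EReal.coe_sub, ← EReal.coe_mul, ← EReal.coe_sub,
    ← EReal.coe_neg, epos, if_neg (EReal.coe_ne_top _), EReal.toReal_coe,
    mul_sKN_half_div_cKN_half hN hd hzK]
  congr 1
  field_simp
  ring

lemma slopeBound_le_descSlope (hN : N < 0) (hf : KNConvex f K N) (hy : y ∈ Dom f) (hzy : z ≠ y)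
    (hzK : K < 0 → dist z y < Real.pi * Real.sqrt (N / K)) :
    slopeBound f K N y z ≤ descSlope f y := by
  by_cases hz : f z = ⊤
  · simp [slopeBound_of_top hN hy hzy hzK hz]
  obtain ⟨γ, hγ, -, hγ0, hγ1, hconv⟩ := hf y trivial z trivial hy.1 hz (by rwa [dist_comm])
  rw [dist_comm y z] at hconv
  set d := dist z y
  set r := (fN f N z / fN f N y).toReal
  have hd : 0 < d := dist_pos.2 hzy
  have hs_pos : ∀ θ, 0 < θ → θ ≤ d → 0 < sKN K N θ := fun θ hθ hθd =>
    sKN_pos hN hθ fun hK => hθd.trans_lt (hzK hK)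
  set g : ℝ → ℝ := fun t =>
    sKN K N ((1 - t) * d) / sKN K N d + sKN K N (t * d) / sKN K N d * r
  rw [slopeBound_eq_ofReal hN hy hzy hzK hz]
  refine ofReal_le_descSlope_of_tendsto (hγ0 ▸ hγ.tendsto_nhdsNE (hγ0 ▸ hγ1 ▸ hzy.symm))
    (tendsto_mul_log_distortion_div hN hd hzK r) ?_
  filter_upwards [Ioo_mem_nhdsGT one_pos] with t ht
  have htd : 0 < t * d := mul_pos ht.1 hd
  have hdist : dist (γ t) y = t * d := by
    rw [← hγ0, hγ.dist_apply_zero (Ioo_subset_Icc_self ht), hγ0, hγ1, dist_comm]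
  have hα : 0 < sKN K N ((1 - t) * d) / sKN K N d :=
    div_pos (hs_pos _ (by nlinarith [ht.2]) (by nlinarith [ht.1])) (hs_pos d hd le_rfl)
  have hβ : 0 ≤ sKN K N (t * d) / sKN K N d :=
    div_nonneg (hs_pos _ htd (by nlinarith [ht.2])).le (hs_pos d hd le_rfl).le
  have hgt : fN f N (γ t) / fN f N y ≤ ENNReal.ofReal (g t) := by
    have h := hconv t (Ioo_subset_Icc_self ht)
    rw [sigmaKN_eq_ofReal_div hN hd hzK, sigmaKN_eq_ofReal_div hN hd hzK] at h
    exact ENNReal.div_le_ofReal_add_mul (fN_ne_zero hy) (fN_ne_top hN hy.1) (fN_ne_top hN hz)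
      hα.le hβ h
  have hg_pos : 0 < g t := add_pos_of_pos_of_nonneg hα (mul_nonneg hβ ENNReal.toReal_nonneg)
  rw [hdist]
  exact ofReal_mul_log_div_le hN hy hg_pos htd hgt

lemma cKN_add_mul_sKN_le_of_slopeBound_le (hN : N < 0) (hy : y ∈ Dom f) (hzy : z ≠ y)
    (hzK : K < 0 → dist z y < Real.pi * Real.sqrt (N / K)) (hz : f z ≠ ⊤) {c : ℝ}
    (hc : 0 ≤ c) (hle : slopeBound f K N y z ≤ ENNReal.ofReal c) :
    cKN K N (dist z y) + c / N * sKN K N (dist z y) ≤ (fN f N z / fN f N y).toReal := by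
  set r := (fN f N z / fN f N y).toReal
  rw [slopeBound_eq_ofReal hN hy hzy hzK hz, ENNReal.ofReal_le_ofReal_iff hc,
    div_le_iff₀ (sKN_pos hN (dist_pos.2 hzy) hzK)] at hle
  have hdiff : r - (cKN K N (dist z y) + c / N * sKN K N (dist z y))
      = (c * sKN K N (dist z y) - -N * (cKN K N (dist z y) - r)) / -N := by
    field_simp [hN.ne]
    ring
  rw [← sub_nonneg, hdiff]
  exact div_nonneg (sub_nonneg.2 hle) (neg_nonneg.2 hN.le)

lemma descSlope_le_iSup_slopeBound (hN : N < 0) (hy : y ∈ Dom f) {R : ℝ} (hR : 0 < R)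
    (hRK : K < 0 → R < Real.pi * Real.sqrt (N / K)) :
    descSlope f y ≤ ⨆ z ∈ Metric.ball y R \ {y}, slopeBound f K N y z := by
  set S := ⨆ z ∈ Metric.ball y R \ {y}, slopeBound f K N y z
  rcases eq_or_ne S ⊤ with hS | hS
  · exact hS ▸ le_top
  rw [← ENNReal.ofReal_toReal hS]
  refine descSlope_le_of_tendsto (tendsto_mul_log_cKN_add_div (K := K) hN S.toReal) ?_
  filter_upwards [(tendsto_dist_nhdsNE y).eventually (eventually_cKN_add_mul_sKN_pos hN _),
    tendsto_dist_nhdsNE y (Ioo_mem_nhdsGT hR)] with z hPz hzR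
  have hzy : z ≠ y := dist_pos.1 hzR.1
  by_cases hz : f z = ⊤
  · simp [hz, EReal.sub_top, epos]
  refine epos_sub_div_le_ofReal_mul_log hN hy hPz hzR.1 ?_
  refine cKN_add_mul_sKN_le_of_slopeBound_le hN hy hzy (fun hK => hzR.2.trans (hRK hK)) hz
    ENNReal.toReal_nonneg ?_
  rw [ENNReal.ofReal_toReal hS]
  exact le_iSup₂_of_le z ⟨Metric.mem_ball.2 hzR.2, hzy⟩ le_rfl

end Metric

end KNPaper

theorem stmt_16 {X : Type*} [MetricSpace X] (f : X → EReal) (K N : ℝ) (hN : N < 0)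
    (hf : KNPaper.KNConvex f K N) :
    ∀ y ∈ KNPaper.Dom f, ∀ R : ℝ, 0 < R →
      (K < 0 → R < Real.pi * Real.sqrt (N / K)) →
      KNPaper.descSlope f y
        = ⨆ z ∈ Metric.ball y R \ {y},
            KNPaper.epos
              (-(((N / KNPaper.sKN K N (dist z y) : ℝ) : EReal)
                  * (1 - ((KNPaper.fN f N z / KNPaper.fN f N y : ℝ≥0∞) : EReal))
                - ((K * KNPaper.sKN K N (dist z y / 2)
                    / KNPaper.cKN K N (dist z y / 2) : ℝ) : EReal))) := by
  intro y hy R hR hRK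
  exact le_antisymm (KNPaper.descSlope_le_iSup_slopeBound hN hy hR hRK)
    (iSup₂_le fun z hz => KNPaper.slopeBound_le_descSlope hN hf hy hz.2
      fun hK => (Metric.mem_ball.1 hz.1).trans (hRK hK))
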